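/- arXiv:1507.08753 — 2 statements merged into one kernel-verified Lean document; each statement's English description precedes it below -/
import Mathlib

section
/- The discriminant of the number field Q[x]/(f_5) and the discriminant of the number field Q[x]/(f_13) are coprime integers (their gcd is 1). -/
/-!
If `θ` is a root of a monic integer quartic `f`, the powers `1, θ, θ², θ³` span a submodule of
the ring of integers of `K = ℚ(θ)` of finite index, so `disc K` divides their discriminant
`det (Tr θ^(i+j))`. Multiplication by `θ` acts on them by the companion matrix `C` of `f`, hence
`Tr θ^k = tr C^k` and that determinant is an integer computation: `2278400 = 2¹⁰·5²·89` for `f₅`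
and `33502053 = 3·13⁴·17·23` for `f₁₃`, which are coprime.
-/

open Polynomial

/-- `f₅ = x⁴ - 2x³ + 3x² - 10x + 25`. -/
noncomputable def f5 : ℚ[X] := X ^ 4 - 2 * X ^ 3 + 3 * X ^ 2 - 10 * X + 25

/-- `f₁₃ = x⁴ + 7x³ + 35x² + 91x + 169`. -/
noncomputable def f13 : ℚ[X] := X ^ 4 + 7 * X ^ 3 + 35 * X ^ 2 + 91 * X + 169

open Matrix Module NumberField

def quarticCompanion {R : Type*} [Ring R] (a₀ a₁ a₂ a₃ : R) : Matrix (Fin 4) (Fin 4) R :=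
  !![0, 0, 0, -a₀; 1, 0, 0, -a₁; 0, 1, 0, -a₂; 0, 0, 1, -a₃]

theorem map_trace_quarticCompanion_pow {R S : Type*} [Ring R] [Ring S] (φ : R →+* S)
    (a₀ a₁ a₂ a₃ : R) (k : ℕ) :
    φ (trace (quarticCompanion a₀ a₁ a₂ a₃ ^ k)) =
      trace (quarticCompanion (φ a₀) (φ a₁) (φ a₂) (φ a₃) ^ k) := by
  rw [AddMonoidHom.map_trace, ← RingHom.mapMatrix_apply, map_pow, RingHom.mapMatrix_apply]
  congr 2
  ext i j
  fin_cases i <;> fin_cases j <;> simp [quarticCompanion]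

section

variable {K L : Type*} [CommRing K] [CommRing L] [Algebra K L]

theorem Algebra.traceMatrix_eq_of_basis_eq_pow {n : ℕ} (b : Basis (Fin n) K L) {θ : L}
    (hb : ∀ i, b i = θ ^ (i : ℕ)) :
    traceMatrix K b = of fun i j : Fin n => Matrix.trace (leftMulMatrix b θ ^ (i + j : ℕ)) := by
  ext i j
  rw [traceMatrix_apply, traceForm_apply, hb, hb, ← pow_add, trace_eq_matrix_trace b, map_pow,
    of_apply]

theorem Algebra.leftMulMatrix_eq_quarticCompanion (b : Basis (Fin 4) K L) {θ : L}
    (hb : ∀ i, b i = θ ^ (i : ℕ)) {a₀ a₁ a₂ a₃ : K}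
    (hθ : θ ^ 4 + algebraMap K L a₃ * θ ^ 3 + algebraMap K L a₂ * θ ^ 2 + algebraMap K L a₁ * θ
      + algebraMap K L a₀ = 0) :
    leftMulMatrix b θ = quarticCompanion a₀ a₁ a₂ a₃ := by
  rw [leftMulMatrix_apply, ← LinearEquiv.eq_symm_apply, LinearMap.toMatrix_symm]
  refine b.ext fun j => ?_
  rw [toLin_self, Fin.sum_univ_four, coe_lmul_eq_mul, hb, hb, hb, hb, hb]
  fin_cases j <;> simp [quarticCompanion, smul_def]
  · ring
  · ring
  · linear_combination hθ

end

theorem AdjoinRoot.isIntegral_root_of_map_eq {R K : Type*} [CommRing R] [CommRing K] [Algebra R K]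
    {f : K[X]} {g : R[X]} (hg : g.Monic) (hgf : g.map (algebraMap R K) = f) :
    IsIntegral R (root f) :=
  ⟨g, hg, by rw [← aeval_def, ← aeval_map_algebraMap K, hgf, aeval_eq, mk_self]⟩

theorem NumberField.discr_dvd_of_isIntegral_basis {K : Type*} [Field K] [NumberField K]
    {ι : Type*} [Fintype ι] [DecidableEq ι] (b : Basis ι ℚ K)
    (hb : ∀ i, IsIntegral ℤ (b i)) {N : ℤ} (hN : Algebra.discr ℚ b = N) :
    discr K ∣ N := by
  let B : Basis ι ℚ K := (integralBasis K).reindex (b.indexEquiv (integralBasis K)).symm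
  have hB : Algebra.discr ℚ B = discr K := by
    rw [Basis.coe_reindex, Algebra.discr_reindex, coe_discr]
  have hchange : Algebra.discr ℚ b = (B.toMatrix b).det ^ 2 * Algebra.discr ℚ B := by
    conv_lhs => rw [← B.toMatrix_map_vecMul b]
    exact Algebra.discr_of_matrix_vecMul B (B.toMatrix b)
  have hdet : IsIntegral ℤ (B.toMatrix b).det := by
    refine IsIntegral.det fun i j => ?_
    obtain ⟨x, hx⟩ : ∃ x : 𝓞 K, algebraMap (𝓞 K) K x = b j :=
      ⟨⟨b j, (mem_integralClosure_iff ℤ K).2 (hb j)⟩, rfl⟩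
    rw [Basis.toMatrix_apply, Basis.repr_reindex_apply, ← hx, integralBasis_repr_apply]
    exact isIntegral_algebraMap
  obtain ⟨d, hd⟩ := IsIntegrallyClosed.isIntegral_iff.1 hdet
  refine ⟨d ^ 2, Int.cast_injective (α := ℚ) ?_⟩
  rw [← hN, hchange, hB, ← hd, eq_intCast]
  push_cast
  ring

theorem NumberField.discr_adjoinRoot_quartic_dvd {f : ℚ[X]} [Fact (Irreducible f)]
    {a₀ a₁ a₂ a₃ : ℤ}
    (hf : f = X ^ 4 + C (a₃ : ℚ) * X ^ 3 + C (a₂ : ℚ) * X ^ 2 + C (a₁ : ℚ) * X + C (a₀ : ℚ)) :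
    discr (AdjoinRoot f) ∣
      (of fun i j : Fin 4 => Matrix.trace (quarticCompanion a₀ a₁ a₂ a₃ ^ (i + j : ℕ))).det := by
  set θ := AdjoinRoot.root f
  have hθint : IsIntegral ℤ θ :=
    AdjoinRoot.isIntegral_root_of_map_eq
      (g := X ^ 4 + C a₃ * X ^ 3 + C a₂ * X ^ 2 + C a₁ * X + C a₀) (by monicity!) (by simp [hf])
  have hθ : aeval θ (X ^ 4 + C (a₃ : ℚ) * X ^ 3 + C (a₂ : ℚ) * X ^ 2 + C (a₁ : ℚ) * X
      + C (a₀ : ℚ)) = 0 := by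
    rw [← hf]
    exact (AdjoinRoot.aeval_eq f).trans AdjoinRoot.mk_self
  simp only [map_add, map_mul, map_pow, aeval_X, aeval_C] at hθ
  have hdim : (AdjoinRoot.powerBasis (Fact.out : Irreducible f).ne_zero).dim = 4 := by
    rw [AdjoinRoot.powerBasis_dim, hf]
    compute_degree!
  let b := (AdjoinRoot.powerBasis (Fact.out : Irreducible f).ne_zero).basis.reindex (finCongr hdim)
  have hb : ∀ i, b i = θ ^ (i : ℕ) := by simp [b, θ]
  refine discr_dvd_of_isIntegral_basis b (fun i => hb i ▸ hθint.pow _) ?_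
  -- `show` reconciles the `ℚ`-algebra structure of `AdjoinRoot f` with `DivisionRing.toRatAlgebra`,
  -- which agree only up to unfolding
  rw [Algebra.discr_def, show Algebra.traceMatrix ℚ b = _ from
      Algebra.traceMatrix_eq_of_basis_eq_pow b hb,
    Algebra.leftMulMatrix_eq_quarticCompanion b hb hθ, Int.cast_det]
  congr 1
  ext i j
  exact (map_trace_quarticCompanion_pow (Int.castRingHom ℚ) _ _ _ _ _).symm

/-- The discriminants of the number fields `ℚ[x]/(f₅)` and `ℚ[x]/(f₁₃)` are coprime
integers: their gcd is `1`. -/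
theorem discr_coprime (h5 : Irreducible f5) (h13 : Irreducible f13) :
    letI : Fact (Irreducible f5) := ⟨h5⟩
    letI : Fact (Irreducible f13) := ⟨h13⟩
    letI : CharZero (AdjoinRoot f5) :=
      charZero_of_injective_algebraMap (algebraMap ℚ _).injective
    letI : CharZero (AdjoinRoot f13) :=
      charZero_of_injective_algebraMap (algebraMap ℚ _).injective
    letI : FiniteDimensional ℚ (AdjoinRoot f5) :=
      PowerBasis.finite (AdjoinRoot.powerBasis h5.ne_zero)
    letI : FiniteDimensional ℚ (AdjoinRoot f13) :=
      PowerBasis.finite (AdjoinRoot.powerBasis h13.ne_zero)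
    letI : NumberField (AdjoinRoot f5) := ⟨⟩
    letI : NumberField (AdjoinRoot f13) := ⟨⟩
    Int.gcd (NumberField.discr (AdjoinRoot f5)) (NumberField.discr (AdjoinRoot f13)) = 1 := by
  have : Fact (Irreducible f5) := ⟨h5⟩
  have : Fact (Irreducible f13) := ⟨h13⟩
  have d5 : discr (AdjoinRoot f5) ∣ 2278400 :=
    (discr_adjoinRoot_quartic_dvd (a₀ := 25) (a₁ := -10) (a₂ := 3) (a₃ := -2)
      (by simp [f5, C_ofNat]; ring)).trans (dvd_of_eq (by decide))
  have d13 : discr (AdjoinRoot f13) ∣ 33502053 :=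
    (discr_adjoinRoot_quartic_dvd (a₀ := 169) (a₁ := 91) (a₂ := 35) (a₃ := 7)
      (by simp [f13, C_ofNat])).trans (dvd_of_eq (by decide))
  rw [← Int.isCoprime_iff_gcd_eq_one]
  exact (Int.isCoprime_iff_gcd_eq_one.2 (by norm_num)).mono d5 d13
end

section
/- If K is a number field (a field of finite dimension over Q) that admits a Q-algebra homomorphism into Q[x]/(f_5) and also a Q-algebra homomorphism into Q[x]/(f_13), then K = Q, i.e. the dimension of K over Q is 1. -/
/-!
A rational number `t` that becomes a square in `K₅ = ℚ[x]/(f₅)` is, up to rational squares,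
`1` or `2`, and one that becomes a square in `K₁₃` is, up to rational squares, `1` or `13`.
Indeed, writing `y = a + bα + cα² + dα³`, two combinations of the coordinate equations of
`y² = t` form a vanishing product in `ℚ(√2)` (resp. `ℚ(√13)`), and solving them gives the
claim. Hence a field `K` embedding into both has no rational non-square that becomes a square
in `K`. Such a `K` cannot be quadratic over `ℚ`, since a quadratic field contains the square
root of its discriminant, and it cannot be quartic, since it would then be isomorphic to `K₅`,
which contains `√2`. As `[K : ℚ]` divides `[K₅ : ℚ] = 4`, it is `1`.
-/

open Polynomial

/-- `h₁` and `h₂` say that `(r₁ + r₂√m)(s₁ + s₂√m) = 0` in `F(√m)`. -/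
theorem eq_zero_or_eq_zero_of_quadratic_mul_coords {F : Type*} [Field F] {m : F}
    (hm : ¬IsSquare m) {r₁ r₂ s₁ s₂ : F} (h₁ : r₁ * s₁ + m * (r₂ * s₂) = 0)
    (h₂ : r₁ * s₂ + r₂ * s₁ = 0) : (r₁ = 0 ∧ r₂ = 0) ∨ (s₁ = 0 ∧ s₂ = 0) := by
  have : Fact (∀ r : F, r ^ 2 ≠ m + 0 * r) :=
    ⟨fun r hr => hm ⟨r, by rw [← sq, hr, zero_mul, add_zero]⟩⟩
  have hmul : (⟨r₁, r₂⟩ * ⟨s₁, s₂⟩ : QuadraticAlgebra F m 0) = 0 := by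
    ext
    · simpa [mul_assoc] using h₁
    · simpa using h₂
  rcases mul_eq_zero.1 hmul with h | h
  · exact .inl ⟨congrArg QuadraticAlgebra.re h, congrArg QuadraticAlgebra.im h⟩
  · exact .inr ⟨congrArg QuadraticAlgebra.re h, congrArg QuadraticAlgebra.im h⟩

theorem eq_zero_of_binary_quadratic_eq_zero {F : Type*} [Field F] {p q r x y : F}
    (hd : ¬IsSquare (discrim p q r)) (h : p * x ^ 2 + q * x * y + r * y ^ 2 = 0) :
    x = 0 ∧ y = 0 := by
  have hy : y = 0 := by
    by_contra hy
    refine quadratic_ne_zero_of_discrim_ne_sq (fun s hs => hd ⟨s, hs.trans (sq s)⟩) (x / y) ?_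
    field_simp
    linear_combination h
  subst hy
  have hp : p ≠ 0 := by
    rintro rfl
    exact hd ⟨q, by rw [discrim]; ring⟩
  simpa [hp] using h

theorem isSquare_of_isSquare_mul_of_isSquare_mul {F : Type*} [Field F] {m n t : F}
    (hmn : ¬IsSquare (m * n)) (hm : IsSquare (m * t)) (hn : IsSquare (n * t)) :
    IsSquare t := by
  rcases eq_or_ne t 0 with rfl | ht
  · exact ⟨0, by simp⟩
  refine absurd ?_ hmn
  have := (hm.mul hn).div (IsSquare.mul_self t)
  rwa [show m * t * (n * t) / (t * t) = m * n by field_simp] at this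

theorem exists_not_isSquare_isSquare_algebraMap_of_finrank_eq_two {F K : Type*} [Field F]
    [Field K] [Algebra F K] [NeZero (2 : F)] (h : Module.finrank F K = 2) :
    ∃ t : F, ¬IsSquare t ∧ IsSquare (algebraMap F K t) := by
  have : FiniteDimensional F K := Module.finite_of_finrank_eq_succ h
  obtain ⟨y, hy⟩ : ∃ y : K, y ∉ (algebraMap F K).range := by
    by_contra! hall
    have := Algebra.finrank_eq_one_iff_bijective_algebraMap.2
      ⟨(algebraMap F K).injective, fun y => hall y⟩
    omega
  have hint : IsIntegral F y := .of_finite F y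
  have hdeg : (minpoly F y).natDegree = 2 := by
    have := minpoly.natDegree_le (A := F) y
    have := minpoly.natDegree_pos hint
    have := (minpoly.natDegree_eq_one_iff (A := F) (x := y)).not.2 hy
    omega
  set b := (minpoly F y).coeff 1
  set c := (minpoly F y).coeff 0
  have hroot : y ^ 2 + algebraMap F K b * y + algebraMap F K c = 0 := by
    have hlead : (minpoly F y).coeff 2 = 1 := hdeg ▸ (minpoly.monic hint).coeff_natDegree
    have := minpoly.aeval F y
    rw [aeval_eq_sum_range, hdeg] at this
    simpa [Finset.sum_range_succ, Algebra.smul_def, hlead, b, c, add_comm, add_left_comm]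
      using this
  -- `2y + b` is the square root of the discriminant `b² - 4c`
  refine ⟨b ^ 2 - 4 * c, fun ⟨s, hs⟩ => hy ?_, 2 * y + algebraMap F K b, ?_⟩
  · have hsq : (2 * y + algebraMap F K b) * (2 * y + algebraMap F K b) =
        algebraMap F K s * algebraMap F K s := by
      rw [← map_mul, ← hs]
      simp only [map_sub, map_mul, map_pow, map_ofNat]
      linear_combination 4 * hroot
    have h2 : (2 : K) ≠ 0 := by
      simpa only [map_ofNat, map_zero] using (algebraMap F K).injective.ne (NeZero.ne (2 : F))
    rcases mul_self_eq_mul_self_iff.1 hsq with hz | hz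
    · exact ⟨(s - b) / 2, by
        rw [map_div₀, map_sub, map_ofNat]; field_simp; linear_combination -hz⟩
    · exact ⟨(-s - b) / 2, by
        rw [map_div₀, map_sub, map_neg, map_ofNat]; field_simp; linear_combination -hz⟩
  · simp only [map_sub, map_mul, map_pow, map_ofNat]
    linear_combination -4 * hroot

theorem AlgHom.finrank_dvd_finrank {F K A : Type*} [Field F] [Field K] [CommRing A]
    [Algebra F K] [Algebra F A] (φ : K →ₐ[F] A) :
    Module.finrank F K ∣ Module.finrank F A := by
  let : Algebra K A := φ.toRingHom.toAlgebra
  have : IsScalarTower F K A := .of_algebraMap_eq fun x => (φ.commutes x).symm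
  exact Module.finrank_dvd_finrank_right F K A

namespace AdjoinRoot

variable {F : Type*} [Field F] {f : F[X]}

theorem exists_eq_cubic (hf : f.Monic) (hdeg : f.natDegree ≤ 4) (y : AdjoinRoot f) :
    ∃ a b c d : F, y = algebraMap F _ a + algebraMap F _ b * root f +
      algebraMap F _ c * root f ^ 2 + algebraMap F _ d * root f ^ 3 := by
  obtain ⟨p, rfl⟩ := mk_surjective y
  set r := p %ₘ f
  refine ⟨r.coeff 0, r.coeff 1, r.coeff 2, r.coeff 3, ?_⟩
  have hr : r.natDegree < 4 := by
    rcases eq_or_ne f 1 with rfl | hf1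
    · simp [r]
    · exact (natDegree_modByMonic_lt p hf hf1).trans_le hdeg
  rw [← mk_leftInverse hf (mk f p), modByMonicHom_mk, ← aeval_eq, aeval_eq_sum_range' hr]
  simp [Finset.sum_range_succ, Algebra.smul_def]

theorem cubic_eq_zero_iff (hdeg : 4 ≤ f.natDegree) {a b c d : F} :
    algebraMap F _ a + algebraMap F _ b * root f + algebraMap F _ c * root f ^ 2 +
      algebraMap F _ d * root f ^ 3 = 0 ↔ a = 0 ∧ b = 0 ∧ c = 0 ∧ d = 0 := by
  refine ⟨fun h => ?_, by rintro ⟨rfl, rfl, rfl, rfl⟩; simp⟩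
  set p : F[X] := C a + C b * X + C c * X ^ 2 + C d * X ^ 3
  have hp : p = 0 := by
    refine eq_zero_of_dvd_of_natDegree_lt (p := f) (mk_eq_zero.1 ?_) ?_
    · simpa [p, ← aeval_eq] using h
    · have : p.natDegree ≤ 3 := by simp only [p]; compute_degree
      omega
  have hcoeff (n : ℕ) := congrArg (coeff · n) hp
  exact ⟨by simpa [p] using hcoeff 0, by simpa [p] using hcoeff 1, by simpa [p] using hcoeff 2,
    by simpa [p] using hcoeff 3⟩

end AdjoinRoot

theorem f5_monic : f5.Monic := by unfold f5; monicity!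

theorem f5_natDegree : f5.natDegree = 4 := by unfold f5; compute_degree!

theorem f13_monic : f13.Monic := by unfold f13; monicity!

theorem f13_natDegree : f13.natDegree = 4 := by unfold f13; compute_degree!

open AdjoinRoot in
theorem f5_eval_root :
    root f5 ^ 4 - 2 * root f5 ^ 3 + 3 * root f5 ^ 2 - 10 * root f5 + 25 = 0 := by
  have h : mk f5 (X ^ 4 - 2 * X ^ 3 + 3 * X ^ 2 - 10 * X + 25) = 0 := mk_self
  simpa only [map_add, map_sub, map_mul, map_pow, map_ofNat, mk_X] using h

open AdjoinRoot in
theorem f13_eval_root :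
    root f13 ^ 4 + 7 * root f13 ^ 3 + 35 * root f13 ^ 2 + 91 * root f13 + 169 = 0 := by
  have h : mk f13 (X ^ 4 + 7 * X ^ 3 + 35 * X ^ 2 + 91 * X + 169) = 0 := mk_self
  simpa only [map_add, map_mul, map_pow, map_ofNat, mk_X] using h

theorem isSquare_algebraMap_two_hundred_f5 : IsSquare (algebraMap ℚ (AdjoinRoot f5) 200) := by
  refine ⟨AdjoinRoot.root f5 ^ 3 - 2 * AdjoinRoot.root f5 ^ 2 - 2 * AdjoinRoot.root f5 - 5, ?_⟩
  rw [map_ofNat]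
  linear_combination -(AdjoinRoot.root f5 ^ 2 - 2 * AdjoinRoot.root f5 - 7) * f5_eval_root

theorem isSquare_or_isSquare_two_mul_of_f5_coords {a b c d t : ℚ}
    (he0 : a ^ 2 - 50 * b * d - 25 * c ^ 2 - 100 * c * d - 25 * d ^ 2 - t = 0)
    (he1 : 2 * a * b + 20 * b * d + 10 * c ^ 2 - 10 * c * d - 40 * d ^ 2 = 0)
    (he2 : 2 * a * c + b ^ 2 - 6 * b * d - 3 * c ^ 2 + 8 * c * d - 8 * d ^ 2 = 0)
    (he3 : 2 * a * d + 2 * b * c + 4 * b * d + 2 * c ^ 2 + 2 * c * d + 6 * d ^ 2 = 0) :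
    IsSquare t ∨ IsSquare (2 * t) := by
  have hCD : b + c + 4 * d = 0 ∧ -2 * c - 4 * d = 0 := by
    -- two combinations of the equations factor as `(A + B√2)(C + D√2) = 0` in `ℚ(√2)`
    rcases eq_zero_or_eq_zero_of_quadratic_mul_coords (m := 2) (by norm_num)
      (r₁ := 2 * a + b - c + 10 * d) (r₂ := -2 * b - 4 * c + 8 * d)
      (s₁ := b + c + 4 * d) (s₂ := -2 * c - 4 * d)
      (by linear_combination he1 + he2 + 4 * he3) (by linear_combination -2 * he2 - 4 * he3)
      with ⟨hA, hB⟩ | hCD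
    · refine eq_zero_of_binary_quadratic_eq_zero (p := 2) (q := 11) (r := 4)
        (by norm_num [discrim]) ?_
      linear_combination -20 * he3 + 20 * d * hA + (4 * (-2 * c - 4 * d) - (b + c + 4 * d)) * hB
    · exact hCD
  obtain ⟨hC, hD⟩ := hCD
  obtain rfl : c = -2 * d := by linarith
  obtain rfl : b = -2 * d := by linarith
  rcases mul_eq_zero.1 (show d * (a + 5 * d) = 0 by linear_combination he3 / 2) with h | h
  · exact .inl ⟨a, by subst h; linear_combination -he0⟩
  · exact .inr ⟨20 * d, by linear_combination -2 * he0 + 2 * (a - 5 * d) * h⟩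

theorem isSquare_or_isSquare_thirteen_mul_of_f13_coords {a b c d t : ℚ}
    (he0 : a ^ 2 - 338 * b * d - 169 * c ^ 2 + 2366 * c * d - 2366 * d ^ 2 - t = 0)
    (he1 : 2 * a * b - 182 * b * d - 91 * c ^ 2 + 936 * c * d - 91 * d ^ 2 = 0)
    (he2 : 2 * a * c + b ^ 2 - 70 * b * d - 35 * c ^ 2 + 308 * c * d - 22 * d ^ 2 = 0)
    (he3 : 2 * a * d + 2 * b * c - 14 * b * d - 7 * c ^ 2 + 28 * c * d + 56 * d ^ 2 = 0) :
    IsSquare t ∨ IsSquare (13 * t) := by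
  have hCD : 2 * b - 7 * c + 5 * d = 0 ∧ -c + 7 * d = 0 := by
    rcases eq_zero_or_eq_zero_of_quadratic_mul_coords (m := 13) (by norm_num)
      (r₁ := 4 * a - 7 * b - 21 * c + 119 * d) (r₂ := -b + 7 * c - d)
      (s₁ := 2 * b - 7 * c + 5 * d) (s₂ := -c + 7 * d)
      (by linear_combination 4 * he1 - 14 * he2 + 10 * he3)
      (by linear_combination -2 * he2 + 14 * he3)
      with ⟨hA, hB⟩ | hCD
    · refine eq_zero_of_binary_quadratic_eq_zero (p := 7) (q := -146) (r := 91)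
        (by norm_num [discrim]) ?_
      linear_combination -8 * he1 + 56 * he2 - 8 * he3 + (4 * b - 28 * c + 4 * d) * hA
    · exact hCD
  obtain ⟨hC, hD⟩ := hCD
  obtain rfl : c = 7 * d := by linarith
  obtain rfl : b = 22 * d := by linarith
  rcases mul_eq_zero.1 (show d * (2 * a - 91 * d) = 0 by linear_combination he3) with h | h
  · exact .inl ⟨a, by subst h; linear_combination -he0⟩
  · exact .inr ⟨169 * d / 2, by linear_combination -13 * he0 + 13 * (a / 2 + 91 * d / 4) * h⟩

theorem isSquare_or_isSquare_two_mul_of_isSquare_algebraMap_f5 {t : ℚ}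
    (ht : IsSquare (algebraMap ℚ (AdjoinRoot f5) t)) : IsSquare t ∨ IsSquare (2 * t) := by
  obtain ⟨y, hy⟩ := ht
  obtain ⟨a, b, c, d, rfl⟩ := AdjoinRoot.exists_eq_cubic f5_monic f5_natDegree.le y
  obtain ⟨he0, he1, he2, he3⟩ := (AdjoinRoot.cubic_eq_zero_iff f5_natDegree.ge
    (a := a ^ 2 - 50 * b * d - 25 * c ^ 2 - 100 * c * d - 25 * d ^ 2 - t)
    (b := 2 * a * b + 20 * b * d + 10 * c ^ 2 - 10 * c * d - 40 * d ^ 2)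
    (c := 2 * a * c + b ^ 2 - 6 * b * d - 3 * c ^ 2 + 8 * c * d - 8 * d ^ 2)
    (d := 2 * a * d + 2 * b * c + 4 * b * d + 2 * c ^ 2 + 2 * c * d + 6 * d ^ 2)).1 (by
      simp only [map_add, map_sub, map_mul, map_pow, map_ofNat]
      -- the cofactor is the quotient of `(a + bX + cX² + dX³)² - t` by `f₅`
      set α := AdjoinRoot.root f5
      set φ := algebraMap ℚ (AdjoinRoot f5)
      linear_combination -hy - (φ d ^ 2 * α ^ 2 + (2 * φ d ^ 2 + 2 * φ c * φ d) * α
        + (φ d ^ 2 + 4 * φ c * φ d + φ c ^ 2 + 2 * φ b * φ d)) * f5_eval_root)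
  exact isSquare_or_isSquare_two_mul_of_f5_coords he0 he1 he2 he3

theorem isSquare_or_isSquare_thirteen_mul_of_isSquare_algebraMap_f13 {t : ℚ}
    (ht : IsSquare (algebraMap ℚ (AdjoinRoot f13) t)) : IsSquare t ∨ IsSquare (13 * t) := by
  obtain ⟨y, hy⟩ := ht
  obtain ⟨a, b, c, d, rfl⟩ := AdjoinRoot.exists_eq_cubic f13_monic f13_natDegree.le y
  obtain ⟨he0, he1, he2, he3⟩ := (AdjoinRoot.cubic_eq_zero_iff f13_natDegree.ge
    (a := a ^ 2 - 338 * b * d - 169 * c ^ 2 + 2366 * c * d - 2366 * d ^ 2 - t)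
    (b := 2 * a * b - 182 * b * d - 91 * c ^ 2 + 936 * c * d - 91 * d ^ 2)
    (c := 2 * a * c + b ^ 2 - 70 * b * d - 35 * c ^ 2 + 308 * c * d - 22 * d ^ 2)
    (d := 2 * a * d + 2 * b * c - 14 * b * d - 7 * c ^ 2 + 28 * c * d + 56 * d ^ 2)).1 (by
      simp only [map_add, map_sub, map_mul, map_pow, map_ofNat]
      set α := AdjoinRoot.root f13
      set φ := algebraMap ℚ (AdjoinRoot f13)
      linear_combination -hy - (φ d ^ 2 * α ^ 2 + (-7 * φ d ^ 2 + 2 * φ c * φ d) * α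
        + (14 * φ d ^ 2 - 14 * φ c * φ d + φ c ^ 2 + 2 * φ b * φ d)) * f13_eval_root)
  exact isSquare_or_isSquare_thirteen_mul_of_f13_coords he0 he1 he2 he3

/-- If a number field `K` admits a `ℚ`-algebra homomorphism into `ℚ[x]/(f₅)` and
also a `ℚ`-algebra homomorphism into `ℚ[x]/(f₁₃)`, then `K = ℚ`, i.e. `K` has
dimension `1` over `ℚ`. -/
theorem common_subfield_is_Q (K : Type*) [Field K] [NumberField K]
    (φ : K →ₐ[ℚ] AdjoinRoot f5) (ψ : K →ₐ[ℚ] AdjoinRoot f13) :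
    Module.finrank ℚ K = 1 := by
  have hsq (t : ℚ) (ht : IsSquare (algebraMap ℚ K t)) : IsSquare t := by
    rcases isSquare_or_isSquare_two_mul_of_isSquare_algebraMap_f5
      (φ.commutes t ▸ ht.map φ) with h | h₂
    · exact h
    rcases isSquare_or_isSquare_thirteen_mul_of_isSquare_algebraMap_f13
      (ψ.commutes t ▸ ht.map ψ) with h | h₁₃
    · exact h
    exact isSquare_of_isSquare_mul_of_isSquare_mul (by norm_num) h₂ h₁₃
  have hK5 : Module.finrank ℚ (AdjoinRoot f5) = 4 :=
    (AdjoinRoot.powerBasis' f5_monic).finrank.trans f5_natDegree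
  have hdvd : Module.finrank ℚ K ∣ 4 := hK5 ▸ φ.finrank_dvd_finrank
  have hpos : 0 < Module.finrank ℚ K := Module.finrank_pos
  have hle : Module.finrank ℚ K ≤ 4 := Nat.le_of_dvd (by norm_num) hdvd
  interval_cases h : Module.finrank ℚ K
  · rfl
  · obtain ⟨t, ht, htK⟩ := exists_not_isSquare_isSquare_algebraMap_of_finrank_eq_two h
    exact absurd (hsq t htK) ht
  · norm_num at hdvd
  · have : FiniteDimensional ℚ (AdjoinRoot f5) := (AdjoinRoot.powerBasis' f5_monic).finite
    have : Nontrivial (AdjoinRoot f5) := Module.nontrivial_of_finrank_pos (R := ℚ) (by omega)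
    have hφ : Function.Surjective φ.toLinearMap :=
      (LinearMap.injective_iff_surjective_of_finrank_eq_finrank (h.trans hK5.symm)).1
        φ.toRingHom.injective
    let e := AlgEquiv.ofBijective φ ⟨φ.toRingHom.injective, hφ⟩
    exact absurd (hsq 200 (e.symm.commutes 200 ▸ isSquare_algebraMap_two_hundred_f5.map e.symm))
      (by norm_num)
end
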